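/- arXiv:2211.03429 — 2 statements merged into one kernel-verified Lean document; each statement's English description precedes it below -/
import Mathlib

section
/- Let V be a finite-dimensional real inner product space, let n ≥ 1, and let f₁, …, fₙ : V → ℝ be differentiable, strictly convex functions. Assume that for every nonempty subset I ⊆ {1, …, n} and every point z ∈ V there exists a point y ≠ z with fᵢ(y) = fᵢ(z) for all i ∈ I (no common level set of any nonempty subfamily is a single point). Then for every x ∈ V there exists a vector v ∈ V such that ⟪∇fᵢ(x), v⟫ > 0 for every i ∈ {1, …, n}; that is, all the functions fᵢ can be simultaneously increased to first order at every point of V. -/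
open RealInnerProductSpace

/-! If `y ≠ x` lies on the common level set through `x` of all the `fᵢ`, strict convexity puts
each `fᵢ` strictly above its tangent plane at `x`, so `⟪∇fᵢ x, y - x⟫ < fᵢ y - fᵢ x = 0`:
the single direction `x - y` increases all the `fᵢ` to first order. -/

section FirstOrderCondition

variable {E : Type*} [NormedAddCommGroup E] [NormedSpace ℝ E] {s : Set E} {f : E → ℝ}
  {f' : E →L[ℝ] ℝ} {x y : E}

theorem ConvexOn.add_fderiv_sub_le (hf : ConvexOn ℝ s f) (hx : x ∈ s) (hy : y ∈ s)
    (hf' : HasFDerivAt f f' x) : f x + f' (y - x) ≤ f y := by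
  let ℓ : ℝ →ᵃ[ℝ] E := AffineMap.lineMap x y
  have hℓ0 : ℓ 0 = x := AffineMap.lineMap_apply_zero x y
  have hℓ1 : ℓ 1 = y := AffineMap.lineMap_apply_one x y
  have hline : HasDerivAt (f ∘ ℓ) (f' (y - x)) 0 :=
    hf'.comp_hasDerivAt_of_eq 0 AffineMap.hasDerivAt_lineMap hℓ0.symm
  have hslope := (hf.comp_affineMap ℓ).le_slope_of_hasDerivAt
    (show ℓ 0 ∈ s from hℓ0 ▸ hx) (show ℓ 1 ∈ s from hℓ1 ▸ hy) zero_lt_one hline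
  simp only [slope_def_field, Function.comp_apply, hℓ0, hℓ1, sub_zero, div_one] at hslope
  linarith

theorem StrictConvexOn.add_fderiv_sub_lt (hf : StrictConvexOn ℝ s f) (hx : x ∈ s) (hy : y ∈ s)
    (hxy : y ≠ x) (hf' : HasFDerivAt f f' x) : f x + f' (y - x) < f y := by
  let m : E := (2⁻¹ : ℝ) • x + (2⁻¹ : ℝ) • y
  have hm : m ∈ s := hf.1 hx hy (by norm_num) (by norm_num) (by norm_num)
  have hfm : f m < 2⁻¹ * f x + 2⁻¹ * f y :=
    hf.2 hx hy hxy.symm (by norm_num) (by norm_num) (by norm_num)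
  have hle := hf.convexOn.add_fderiv_sub_le hx hm hf'
  have hmx : m - x = (2⁻¹ : ℝ) • (y - x) := by module
  rw [hmx, map_smul, smul_eq_mul] at hle
  linarith

end FirstOrderCondition

/-- If `f₁, …, fₙ` are differentiable strictly convex functions on a
finite-dimensional real inner product space such that no common level set of a nonempty
subfamily is a single point, then at every point there is a direction in which all the
functions increase to first order. -/
theorem simultaneous_increase_of_strictlyConvex
    {V : Type*} [NormedAddCommGroup V] [InnerProductSpace ℝ V] [FiniteDimensional ℝ V]
    (n : ℕ) (hn : 1 ≤ n) (f : Fin n → V → ℝ)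
    (hdiff : ∀ i, Differentiable ℝ (f i))
    (hconv : ∀ i, StrictConvexOn ℝ Set.univ (f i))
    (hlevel : ∀ I : Finset (Fin n), I.Nonempty → ∀ z : V,
      ∃ y : V, y ≠ z ∧ ∀ i ∈ I, f i y = f i z) :
    ∀ x : V, ∃ v : V, ∀ i, 0 < ⟪gradient (f i) x, v⟫ := by
  intro x
  have : Nonempty (Fin n) := Fin.pos_iff_nonempty.1 hn
  obtain ⟨y, hyx, hfy⟩ := hlevel Finset.univ Finset.univ_nonempty x
  refine ⟨x - y, fun i => ?_⟩
  have htangent := (hconv i).add_fderiv_sub_lt trivial trivial hyx (hdiff i x).hasFDerivAt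
  rw [hfy i (Finset.mem_univ i)] at htangent
  rw [inner_gradient_left, ← neg_sub, map_neg]
  linarith
end

section
/- Let E be a finite-dimensional real inner product space and let Γ be a subgroup of the group of affine isometric equivalences of E. Let X : E → E be a locally Lipschitz vector field that is Γ-equivariant, meaning X(γ(x)) = Lγ(X(x)) for every γ ∈ Γ and x ∈ E, where Lγ denotes the linear part of the affine isometry γ. Suppose there is a compact set K ⊆ E with {x ∈ E : X(x) ≠ 0} ⊆ ⋃_{γ ∈ Γ} γ(K) (the support of X is compact modulo the action of Γ). Then the flow of X is complete: for every x₀ ∈ E there exists a curve f : ℝ → E with f(0) = x₀ and, for every t ∈ ℝ, f'(t) = X(f(t)). -/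
/-!
Since `Γ` acts by isometries and `X` intertwines it with the linear parts, `‖X‖` is `Γ`-invariant
and so is the Lipschitz quotient `dist (X x) (X y) / dist x y`. Both can therefore be computed with
`x` in the compact set `K`: `X` is bounded, and being Lipschitz on the compact set
`cthickening 1 K` it is globally Lipschitz. A bounded Lipschitz vector field has solutions on every
interval `[-T, T]` by Picard–Lindelöf, and by uniqueness these glue to a global solution.
-/

open Set Metric
open scoped NNReal

section ODE

variable {E : Type*} [NormedAddCommGroup E] [NormedSpace ℝ E] {X : E → E} {L : ℝ≥0}

theorem exists_forall_mem_Ioo_hasDerivAt_of_lipschitzWith_of_norm_le [CompleteSpace E]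
    (hX : LipschitzWith L X) {M : ℝ≥0} (hM : ∀ x, ‖X x‖ ≤ M) (x₀ : E) (T : ℝ≥0) :
    ∃ f : ℝ → E, f 0 = x₀ ∧ ∀ t ∈ Ioo (-T : ℝ) T, HasDerivAt f (X (f t)) t := by
  have hPL : IsPicardLindelof (fun _ ↦ X) (tmin := -T) (tmax := T)
      ⟨0, by simp⟩ x₀ (M * T) 0 M L :=
    .of_time_independent (fun x _ ↦ hM x) hX.lipschitzOnWith (by simp)
  obtain ⟨f, hf₀, hf⟩ := hPL.exists_eq_forall_mem_Icc_hasDerivWithinAt₀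
  exact ⟨f, hf₀, fun t ht ↦
    (hf t (Ioo_subset_Icc_self ht)).hasDerivAt (Icc_mem_nhds ht.1 ht.2)⟩

theorem exists_forall_hasDerivAt_of_forall_mem_Ioo (hX : LipschitzWith L X) {x₀ : E}
    (h : ∀ T : ℝ≥0, ∃ f : ℝ → E, f 0 = x₀ ∧ ∀ t ∈ Ioo (-T : ℝ) T, HasDerivAt f (X (f t)) t) :
    ∃ f : ℝ → E, f 0 = x₀ ∧ ∀ t, HasDerivAt f (X (f t)) t := by
  choose γ hγ₀ hγ using h
  have heqOn {T T' : ℝ≥0} (hTT' : T ≤ T') : EqOn (γ T) (γ T') (Ioo (-T : ℝ) T) := fun t ht ↦ by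
    have hsub : Ioo (-T : ℝ) T ⊆ Ioo (-T' : ℝ) T' := Ioo_subset_Ioo (by simpa) (by simpa)
    refine ODE_solution_unique_of_mem_Ioo (s := fun _ ↦ univ) (fun _ _ ↦ hX.lipschitzOnWith)
      ?_ (fun s hs ↦ ⟨hγ T s hs, mem_univ _⟩) (fun s hs ↦ ⟨hγ T' s (hsub hs), mem_univ _⟩)
      (by rw [hγ₀, hγ₀]) ht
    constructor <;> linarith [ht.1, ht.2]
  have hagree {T T' : ℝ≥0} {t : ℝ} (ht : t ∈ Ioo (-T : ℝ) T) (ht' : t ∈ Ioo (-T' : ℝ) T') :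
      γ T t = γ T' t := by
    rcases le_total T T' with hle | hle
    exacts [heqOn hle ht, (heqOn hle ht').symm]
  have hmem (t : ℝ) : t ∈ Ioo (-(‖t‖₊ + 1 : ℝ≥0) : ℝ) (‖t‖₊ + 1 : ℝ≥0) := by
    simp only [NNReal.coe_add, coe_nnnorm, NNReal.coe_one, mem_Ioo, ← abs_lt, Real.norm_eq_abs]
    exact lt_add_one _
  refine ⟨fun t ↦ γ (‖t‖₊ + 1) t, hγ₀ _, fun t ↦ ?_⟩
  refine (hγ _ t (hmem t)).congr_of_eventuallyEq ?_
  filter_upwards [Ioo_mem_nhds (hmem t).1 (hmem t).2] with s hs using hagree (hmem s) hs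

theorem exists_forall_hasDerivAt_of_lipschitzWith_of_norm_le [CompleteSpace E]
    (hX : LipschitzWith L X) {M : ℝ≥0} (hM : ∀ x, ‖X x‖ ≤ M) (x₀ : E) :
    ∃ f : ℝ → E, f 0 = x₀ ∧ ∀ t, HasDerivAt f (X (f t)) t :=
  exists_forall_hasDerivAt_of_forall_mem_Ioo hX
    (exists_forall_mem_Ioo_hasDerivAt_of_lipschitzWith_of_norm_le hX hM x₀)

end ODE

theorem LocallyLipschitz.exists_dist_le_mul_of_isCompact_of_dist_le {α β : Type*}
    [PseudoMetricSpace α] [ProperSpace α] [PseudoMetricSpace β] {f : α → β}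
    (hf : LocallyLipschitz f) {K : Set α} (hK : IsCompact K) {D : ℝ}
    (hD : ∀ x y, dist (f x) (f y) ≤ D) :
    ∃ C : ℝ≥0, ∀ a ∈ K, ∀ b, dist (f a) (f b) ≤ C * dist a b := by
  obtain ⟨L, hL⟩ :=
    (hf.locallyLipschitzOn (s := cthickening 1 K)).exists_lipschitzOnWith_of_compact hK.cthickening
  refine ⟨max L D.toNNReal, fun a ha b ↦ ?_⟩
  rcases le_or_gt (dist a b) 1 with hab | hab
  · calc dist (f a) (f b) ≤ L * dist a b :=
          hL.dist_le_mul a (self_subset_cthickening K ha) b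
            (mem_cthickening_of_dist_le b a 1 K ha (by rwa [dist_comm]))
      _ ≤ max L D.toNNReal * dist a b := by gcongr; exact_mod_cast le_max_left _ _
  · calc dist (f a) (f b) ≤ D.toNNReal * 1 := by
          rw [mul_one]; exact (hD a b).trans (Real.le_coe_toNNReal D)
      _ ≤ max L D.toNNReal * dist a b := by
          gcongr
          exact_mod_cast le_max_right _ _

section Equivariant

variable {E : Type*} [NormedAddCommGroup E] [NormedSpace ℝ E] {Γ : Subgroup (E ≃ᵃⁱ[ℝ] E)}
  {X : E → E} {K : Set E}

theorem exists_norm_le_of_equivariant_of_isCompact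
    (hequiv : ∀ γ ∈ Γ, ∀ x : E, X (γ x) = γ.linearIsometryEquiv (X x))
    (hsupp : {x : E | X x ≠ 0} ⊆ ⋃ γ ∈ Γ, (γ : E ≃ᵃⁱ[ℝ] E) '' K)
    (hX : Continuous X) (hK : IsCompact K) : ∃ M : ℝ≥0, ∀ x, ‖X x‖ ≤ M := by
  obtain ⟨C, hC⟩ := hK.exists_bound_of_continuousOn hX.continuousOn
  refine ⟨C.toNNReal, fun x ↦ ?_⟩
  rcases eq_or_ne (X x) 0 with hx | hx
  · simp [hx]
  obtain ⟨γ, hγ, k, hk, rfl⟩ : ∃ γ ∈ Γ, ∃ k ∈ K, γ k = x := by simpa using hsupp hx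
  rw [hequiv γ hγ k, LinearIsometryEquiv.norm_map]
  exact (hC k hk).trans (Real.le_coe_toNNReal C)

theorem lipschitzWith_of_equivariant_of_dist_le_mul
    (hequiv : ∀ γ ∈ Γ, ∀ x : E, X (γ x) = γ.linearIsometryEquiv (X x))
    (hsupp : {x : E | X x ≠ 0} ⊆ ⋃ γ ∈ Γ, (γ : E ≃ᵃⁱ[ℝ] E) '' K) {C : ℝ≥0}
    (hC : ∀ a ∈ K, ∀ b, dist (X a) (X b) ≤ C * dist a b) : LipschitzWith C X := by
  have hle_of_ne_zero {x : E} (hx : X x ≠ 0) (y : E) : dist (X x) (X y) ≤ C * dist x y := by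
    obtain ⟨γ, hγ, k, hk, rfl⟩ : ∃ γ ∈ Γ, ∃ k ∈ K, γ k = x := by simpa using hsupp hx
    obtain ⟨z, rfl⟩ := γ.surjective y
    rw [hequiv γ hγ, hequiv γ hγ, LinearIsometryEquiv.dist_map, AffineIsometryEquiv.dist_map]
    exact hC k hk z
  refine LipschitzWith.of_dist_le_mul fun x y ↦ ?_
  rcases ne_or_eq (X x) 0 with hx | hx
  · exact hle_of_ne_zero hx y
  rcases ne_or_eq (X y) 0 with hy | hy
  · rw [dist_comm, dist_comm x]; exact hle_of_ne_zero hy x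
  · rw [hx, hy, dist_self]; positivity

end Equivariant

/-- A locally Lipschitz vector field on a finite-dimensional real inner
product space that is equivariant under a subgroup `Γ` of affine isometric equivalences
and whose support is compact modulo the action of `Γ` generates a complete flow. -/
theorem complete_flow_of_equivariant_support_compact_mod_group
    {E : Type*} [NormedAddCommGroup E] [InnerProductSpace ℝ E] [FiniteDimensional ℝ E]
    (Γ : Subgroup (E ≃ᵃⁱ[ℝ] E))
    (X : E → E) (hX : LocallyLipschitz X)
    (hequiv : ∀ γ ∈ Γ, ∀ x : E, X (γ x) = γ.linearIsometryEquiv (X x))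
    (K : Set E) (hK : IsCompact K)
    (hsupp : {x : E | X x ≠ 0} ⊆ ⋃ γ ∈ Γ, (γ : E ≃ᵃⁱ[ℝ] E) '' K) :
    ∀ x₀ : E, ∃ f : ℝ → E, f 0 = x₀ ∧ ∀ t : ℝ, HasDerivAt f (X (f t)) t := by
  obtain ⟨M, hM⟩ := exists_norm_le_of_equivariant_of_isCompact hequiv hsupp hX.continuous hK
  have hdist (x y : E) : dist (X x) (X y) ≤ 2 * M :=
    (dist_le_norm_add_norm _ _).trans (by linarith [hM x, hM y])
  obtain ⟨C, hC⟩ := hX.exists_dist_le_mul_of_isCompact_of_dist_le hK hdist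
  exact exists_forall_hasDerivAt_of_lipschitzWith_of_norm_le
    (lipschitzWith_of_equivariant_of_dist_le_mul hequiv hsupp hC) hM
end
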